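/- Let a < b, κ ≠ 0 a real constant, ρ : [a,b] → ℝ continuous, and u ∈ C⁴([a,b]). Then the first variation (d/dε)|_{ε=0} S(u + εv) of the beam action vanishes for every v ∈ C²([a,b]) if and only if u satisfies both the Euler–Lagrange equation κ u''''(x) = ρ(x) on [a,b] and the natural boundary conditions u''(a) = u''(b) = 0, u'''(a) = u'''(b) = 0. -/

import Mathlib

open Set

/-- `f` is of class `C²` on `s`, with successive derivatives `f1, f2`. -/
def IsC2On (f f1 f2 : ℝ → ℝ) (s : Set ℝ) : Prop :=
  (∀ x ∈ s, HasDerivWithinAt f (f1 x) s x) ∧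
  (∀ x ∈ s, HasDerivWithinAt f1 (f2 x) s x) ∧
  ContinuousOn f2 s

/-- `f` is of class `C⁴` on `s`, with successive derivatives `f1, f2, f3, f4`. -/
def IsC4On (f f1 f2 f3 f4 : ℝ → ℝ) (s : Set ℝ) : Prop :=
  (∀ x ∈ s, HasDerivWithinAt f (f1 x) s x) ∧
  (∀ x ∈ s, HasDerivWithinAt f1 (f2 x) s x) ∧
  (∀ x ∈ s, HasDerivWithinAt f2 (f3 x) s x) ∧
  (∀ x ∈ s, HasDerivWithinAt f3 (f4 x) s x) ∧
  ContinuousOn f4 s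

/-!
Since `S(u + εv)` is quadratic in `ε`, the first variation in direction `v` is
`∫ₐᵇ (U v'' − ρ v)` with `U = κ u''`. If `U'' = ρ` and `U, U'` vanish at both ends, it is zero
by Green's identity `∫ₐᵇ (U'' v − U v'') = [U' v − U v']ₐᵇ`. Conversely, let `R` be the double
primitive of `ρ` with `R(a) = R'(a) = 0`, and test with the double primitive `v` of `w = U − R`
with `v(b) = v'(b) = 0`. Green's identity for `R` and `v` then has no boundary terms, and the
vanishing of the first variation becomes `∫ₐᵇ w² = 0`. Hence `U = R`, which gives `U'' = ρ` and
`U(a) = U'(a) = 0`; the same argument started from `b` gives the conditions at `b`.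
-/

open MeasureTheory intervalIntegral

section Regularity

variable {s : Set ℝ} {f f1 f2 f3 f4 : ℝ → ℝ}

theorem IsC2On.continuousOn (hf : IsC2On f f1 f2 s) : ContinuousOn f s :=
  fun x hx => (hf.1 x hx).continuousWithinAt

theorem IsC2On.const_mul (hf : IsC2On f f1 f2 s) (c : ℝ) :
    IsC2On (fun x => c * f x) (fun x => c * f1 x) (fun x => c * f2 x) s :=
  ⟨fun x hx => (hf.1 x hx).const_mul c, fun x hx => (hf.2.1 x hx).const_mul c,
    continuousOn_const.mul hf.2.2⟩

theorem IsC4On.continuousOn (hf : IsC4On f f1 f2 f3 f4 s) : ContinuousOn f s :=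
  fun x hx => (hf.1 x hx).continuousWithinAt

theorem IsC4On.isC2On_deriv2 (hf : IsC4On f f1 f2 f3 f4 s) : IsC2On f2 f3 f4 s :=
  hf.2.2

theorem IsC2On.eqOn_derivs_of_eqOn (hs : UniqueDiffOn ℝ s) {g g1 g2 : ℝ → ℝ}
    (hf : IsC2On f f1 f2 s) (hg : IsC2On g g1 g2 s) (hfg : EqOn f g s) :
    EqOn f1 g1 s ∧ EqOn f2 g2 s := by
  have h1 : EqOn f1 g1 s := fun x hx =>
    (hs x hx).eq_deriv s ((hf.1 x hx).congr_of_mem (fun y hy => (hfg hy).symm) hx) (hg.1 x hx)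
  exact ⟨h1, fun x hx =>
    (hs x hx).eq_deriv s ((hf.2.1 x hx).congr_of_mem (fun y hy => (h1 hy).symm) hx) (hg.2.1 x hx)⟩

end Regularity

section Interval

variable {a b : ℝ}

theorem hasDerivWithinAt_integral_of_continuousOn_Icc {f : ℝ → ℝ} (hf : ContinuousOn f (Icc a b))
    {c x : ℝ} (hc : c ∈ Icc a b) (hx : x ∈ Icc a b) :
    HasDerivWithinAt (fun y => ∫ t in c..y, f t) (f x) (Icc a b) x := by
  have : Fact (x ∈ Icc a b) := ⟨hx⟩
  refine integral_hasDerivWithinAt_right ?_ ?_ (hf x hx)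
  · exact (hf.mono (uIcc_subset_Icc hc hx)).intervalIntegrable
  · exact ⟨Icc a b, self_mem_nhdsWithin, hf.aestronglyMeasurable measurableSet_Icc⟩

theorem isC2On_integral_integral {f : ℝ → ℝ} (hf : ContinuousOn f (Icc a b)) {c : ℝ}
    (hc : c ∈ Icc a b) :
    IsC2On (fun x => ∫ y in c..x, ∫ t in c..y, f t) (fun y => ∫ t in c..y, f t) f (Icc a b) := by
  have hF := fun x (hx : x ∈ Icc a b) => hasDerivWithinAt_integral_of_continuousOn_Icc hf hc hx
  have hFc : ContinuousOn (fun y => ∫ t in c..y, f t) (Icc a b) :=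
    fun x hx => (hF x hx).continuousWithinAt
  exact ⟨fun x hx => hasDerivWithinAt_integral_of_continuousOn_Icc hFc hc hx, hF, hf⟩

theorem integral_deriv2_mul_sub_mul_deriv2 {f f1 f2 g g1 g2 : ℝ → ℝ}
    (hf : IsC2On f f1 f2 (uIcc a b)) (hg : IsC2On g g1 g2 (uIcc a b)) :
    ∫ x in a..b, (f2 x * g x - f x * g2 x)
      = (f1 b * g b - f b * g1 b) - (f1 a * g a - f a * g1 a) := by
  have hW : ∀ x ∈ uIcc a b, HasDerivWithinAt (fun y => f1 y * g y - f y * g1 y)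
      (f2 x * g x - f x * g2 x) (uIcc a b) x := fun x hx =>
    (((hf.2.1 x hx).mul (hg.1 x hx)).sub ((hf.1 x hx).mul (hg.2.1 x hx))).congr_deriv (by ring)
  refine integral_eq_sub_of_hasDeriv_right
    (fun x hx => (hW x hx).continuousWithinAt) (fun x hx => ?_)
    ((hf.2.2.mul hg.continuousOn).sub (hf.continuousOn.mul hg.2.2)).intervalIntegrable
  exact ((hW x (mem_Icc_of_Ioo hx)).hasDerivAt (Icc_mem_nhds hx.1 hx.2)).hasDerivWithinAt

theorem eqOn_zero_of_integral_sq_eq_zero (hab : a ≠ b) {f : ℝ → ℝ}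
    (hf : ContinuousOn f (uIcc a b)) (h : ∫ x in a..b, f x ^ 2 = 0) : EqOn f 0 (uIcc a b) := by
  wlog hlt : a < b generalizing a b
  · rw [uIcc_comm] at hf ⊢
    exact this hab.symm hf (by rw [integral_symm, h, neg_zero]) (hab.lt_or_gt.resolve_left hlt)
  rw [uIcc_of_le hlt.le] at hf ⊢
  intro x hx
  by_contra hne
  have hpos := integral_pos hlt (hf.pow 2) (fun y _ => sq_nonneg (f y))
    ⟨x, hx, sq_pos_of_ne_zero hne⟩
  exact hpos.ne' h

theorem hasDerivAt_integral_beam_variation (κ : ℝ) {p q r s t : ℝ → ℝ}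
    (hp : ContinuousOn p (uIcc a b)) (hq : ContinuousOn q (uIcc a b))
    (hr : ContinuousOn r (uIcc a b)) (hs : ContinuousOn s (uIcc a b))
    (ht : ContinuousOn t (uIcc a b)) :
    HasDerivAt (fun ε : ℝ => ∫ x in a..b, (κ * (p x + ε * q x) ^ 2 / 2 - r x * (s x + ε * t x)))
      (∫ x in a..b, (κ * p x * q x - r x * t x)) 0 := by
  set A := ∫ x in a..b, (κ * p x ^ 2 / 2 - r x * s x)
  set B := ∫ x in a..b, (κ * p x * q x - r x * t x)
  set C := ∫ x in a..b, κ * q x ^ 2 / 2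
  have hA : IntervalIntegrable (fun x => κ * p x ^ 2 / 2 - r x * s x) volume a b :=
    (((continuousOn_const.mul (hp.pow 2)).div_const 2).sub (hr.mul hs)).intervalIntegrable
  have hB : IntervalIntegrable (fun x => κ * p x * q x - r x * t x) volume a b :=
    (((continuousOn_const.mul hp).mul hq).sub (hr.mul ht)).intervalIntegrable
  have hC : IntervalIntegrable (fun x => κ * q x ^ 2 / 2) volume a b :=
    ((continuousOn_const.mul (hq.pow 2)).div_const 2).intervalIntegrable
  have hquadratic : (fun ε : ℝ => ∫ x in a..b,
      (κ * (p x + ε * q x) ^ 2 / 2 - r x * (s x + ε * t x))) = fun ε => A + ε * B + ε ^ 2 * C := by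
    funext ε
    rw [← intervalIntegral.integral_const_mul, ← intervalIntegral.integral_const_mul,
      ← integral_add hA (hB.const_mul ε), ← integral_add (hA.add (hB.const_mul ε)) (hC.const_mul _)]
    exact integral_congr fun x _ => by ring
  rw [hquadratic]
  simpa using (((hasDerivAt_id (0 : ℝ)).mul_const B).const_add A).fun_add
    ((hasDerivAt_pow 2 (0 : ℝ)).mul_const C)

end Interval

section WeakSolution

variable {a b : ℝ} {U U1 U2 ρ : ℝ → ℝ}

def IsFreeWeakSolution (U ρ : ℝ → ℝ) (a b : ℝ) : Prop :=
  ∀ v v1 v2 : ℝ → ℝ, IsC2On v v1 v2 (uIcc a b) → ∫ x in a..b, (U x * v2 x - ρ x * v x) = 0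

theorem IsFreeWeakSolution.symm (h : IsFreeWeakSolution U ρ a b) : IsFreeWeakSolution U ρ b a :=
  fun v v1 v2 hv => by rw [integral_symm, h v v1 v2 (uIcc_comm b a ▸ hv), neg_zero]

theorem IsFreeWeakSolution.eqOn_integral_integral (hab : a ≠ b) (hU : ContinuousOn U (uIcc a b))
    (hρ : ContinuousOn ρ (uIcc a b)) (h : IsFreeWeakSolution U ρ a b) :
    EqOn U (fun x => ∫ y in a..x, ∫ t in a..y, ρ t) (uIcc a b) := by
  set R := fun x => ∫ y in a..x, ∫ t in a..y, ρ t
  have hR : IsC2On R (fun y => ∫ t in a..y, ρ t) ρ (uIcc a b) :=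
    isC2On_integral_integral hρ left_mem_uIcc
  set w := fun x => U x - R x
  have hw : ContinuousOn w (uIcc a b) := hU.sub hR.continuousOn
  set v := fun x => ∫ y in b..x, ∫ t in b..y, w t
  have hv : IsC2On v (fun y => ∫ t in b..y, w t) w (uIcc a b) :=
    isC2On_integral_integral hw right_mem_uIcc
  have hgreen : ∫ x in a..b, (ρ x * v x - R x * w x) = 0 := by
    simpa [R, v] using integral_deriv2_mul_sub_mul_deriv2 hR hv
  have hint : IntervalIntegrable (fun x => U x * w x - ρ x * v x) volume a b :=
    ((hU.mul hw).sub (hρ.mul hv.continuousOn)).intervalIntegrable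
  have hint' : IntervalIntegrable (fun x => ρ x * v x - R x * w x) volume a b :=
    ((hρ.mul hv.continuousOn).sub (hR.continuousOn.mul hw)).intervalIntegrable
  have hw_sq : ∫ x in a..b, w x ^ 2 = 0 :=
    calc ∫ x in a..b, w x ^ 2
        = ∫ x in a..b, ((U x * w x - ρ x * v x) + (ρ x * v x - R x * w x)) :=
          integral_congr fun x _ => by simp only [w]; ring
      _ = 0 := by rw [integral_add hint hint', h _ _ _ hv, hgreen, add_zero]
  exact fun x hx => sub_eq_zero.1 (eqOn_zero_of_integral_sq_eq_zero hab hw hw_sq hx)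

theorem IsFreeWeakSolution.eqOn_deriv2_and_left (hab : a ≠ b) (hU : IsC2On U U1 U2 (uIcc a b))
    (hρ : ContinuousOn ρ (uIcc a b)) (h : IsFreeWeakSolution U ρ a b) :
    EqOn U2 ρ (uIcc a b) ∧ U a = 0 ∧ U1 a = 0 := by
  have hUR := h.eqOn_integral_integral hab hU.continuousOn hρ
  obtain ⟨hU1, hU2⟩ := hU.eqOn_derivs_of_eqOn (uniqueDiffOn_Icc (min_lt_max.2 hab))
    (isC2On_integral_integral hρ left_mem_uIcc) hUR
  exact ⟨hU2, by simpa using hUR left_mem_uIcc, by simpa using hU1 left_mem_uIcc⟩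

theorem isFreeWeakSolution_iff (hab : a ≠ b) (hU : IsC2On U U1 U2 (uIcc a b))
    (hρ : ContinuousOn ρ (uIcc a b)) :
    IsFreeWeakSolution U ρ a b ↔
      EqOn U2 ρ (uIcc a b) ∧ U a = 0 ∧ U b = 0 ∧ U1 a = 0 ∧ U1 b = 0 := by
  constructor
  · intro h
    obtain ⟨hU2, hUa, hU1a⟩ := h.eqOn_deriv2_and_left hab hU hρ
    rw [uIcc_comm] at hU hρ
    obtain ⟨-, hUb, hU1b⟩ := h.symm.eqOn_deriv2_and_left hab.symm hU hρ
    exact ⟨hU2, hUa, hUb, hU1a, hU1b⟩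
  · rintro ⟨hU2, hUa, hUb, hU1a, hU1b⟩ v v1 v2 hv
    have hgreen := integral_deriv2_mul_sub_mul_deriv2 hU hv
    rw [hUa, hU1a, hUb, hU1b] at hgreen
    rw [← neg_eq_zero, ← intervalIntegral.integral_neg]
    calc ∫ x in a..b, -(U x * v2 x - ρ x * v x)
        = ∫ x in a..b, (U2 x * v x - U x * v2 x) :=
          integral_congr fun x hx => by rw [hU2 hx]; ring
      _ = 0 := by rw [hgreen]; ring

end WeakSolution

/-- A `C⁴` function `u` is a critical point of the beam action
`S(u) = ∫ₐᵇ (κ u''²/2 − ρ u) dx` for arbitrary `C²` variations (no endpoint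
conditions) if and only if it satisfies both the Euler–Lagrange equation
`κ u'''' = ρ` on `[a,b]` and the natural boundary conditions
`u''(a) = u''(b) = 0`, `u'''(a) = u'''(b) = 0`. -/
theorem beam_free_boundary_critical_iff
    (a b κ : ℝ) (hab : a < b) (hκ : κ ≠ 0)
    (ρ : ℝ → ℝ) (hρ : ContinuousOn ρ (Icc a b))
    (u u1 u2 u3 u4 : ℝ → ℝ) (hu : IsC4On u u1 u2 u3 u4 (Icc a b)) :
    (∀ v v1 v2 : ℝ → ℝ, IsC2On v v1 v2 (Icc a b) →
      HasDerivAt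
        (fun ε : ℝ => ∫ x in a..b,
          (κ * (u2 x + ε * v2 x) ^ 2 / 2 - ρ x * (u x + ε * v x)))
        0 0) ↔
      ((∀ x ∈ Icc a b, κ * u4 x = ρ x) ∧
        u2 a = 0 ∧ u2 b = 0 ∧ u3 a = 0 ∧ u3 b = 0) := by
  rw [← uIcc_of_le hab.le] at hρ hu ⊢
  have hweak := isFreeWeakSolution_iff hab.ne (hu.isC2On_deriv2.const_mul κ) hρ
  simp only [EqOn, mul_eq_zero, hκ, false_or] at hweak
  refine Iff.trans (forall₄_congr ?_) hweak
  intro v v1 v2 hv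
  have hδ := hasDerivAt_integral_beam_variation κ hu.isC2On_deriv2.continuousOn hv.2.2 hρ
    hu.continuousOn hv.continuousOn
  exact ⟨hδ.unique, fun h => h ▸ hδ⟩
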